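/- Let U ⊆ ℝ² be open, g : U → ℝ smooth and harmonic, c ≠ 0, and suppose 2c²g³ = (g_u)² + (g_v)² on U. Then at every point of U, g · g_v · [3c²g³ - (g_u)² - (g_v)²] = 0 and g · g_u · [3c²g³ - (g_u)² - (g_v)²] = 0. -/

import Mathlib

open scoped ContDiff

noncomputable def pdu (f : ℝ × ℝ → ℝ) : ℝ × ℝ → ℝ := fun p => fderiv ℝ f p (1, 0)
noncomputable def pdv (f : ℝ × ℝ → ℝ) : ℝ × ℝ → ℝ := fun p => fderiv ℝ f p (0, 1)

section helpers
variable {U : Set (ℝ × ℝ)} {f h : ℝ × ℝ → ℝ} {p : ℝ × ℝ} {w : ℝ × ℝ}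

lemma pd_congr (hU : IsOpen U) (hfh : ∀ q ∈ U, f q = h q) (hp : p ∈ U) :
    fderiv ℝ f p = fderiv ℝ h p :=
  Filter.EventuallyEq.fderiv_eq (Filter.eventuallyEq_of_mem (hU.mem_nhds hp) hfh)

lemma dAt (hU : IsOpen U) (hf : ContDiffOn ℝ ∞ f U) (hp : p ∈ U) :
    DifferentiableAt ℝ f p :=
  ((hf p hp).contDiffAt (hU.mem_nhds hp)).differentiableAt (by norm_num)

lemma pd_contDiffOn (hU : IsOpen U) (hf : ContDiffOn ℝ ∞ f U) (w : ℝ × ℝ) :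
    ContDiffOn ℝ ∞ (fun p => fderiv ℝ f p w) U :=
  (hf.fderiv_of_isOpen hU (by norm_num)).clm_apply contDiffOn_const

lemma pdu_contDiffOn (hU : IsOpen U) (hf : ContDiffOn ℝ ∞ f U) :
    ContDiffOn ℝ ∞ (pdu f) U := pd_contDiffOn hU hf _

lemma pdv_contDiffOn (hU : IsOpen U) (hf : ContDiffOn ℝ ∞ f U) :
    ContDiffOn ℝ ∞ (pdv f) U := pd_contDiffOn hU hf _

lemma pd_add (hf : DifferentiableAt ℝ f p) (hh : DifferentiableAt ℝ h p) :
    fderiv ℝ (fun q => f q + h q) p w = fderiv ℝ f p w + fderiv ℝ h p w := by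
  rw [fderiv_fun_add hf hh]; simp

lemma pd_mul (hf : DifferentiableAt ℝ f p) (hh : DifferentiableAt ℝ h p) :
    fderiv ℝ (fun q => f q * h q) p w = fderiv ℝ f p w * h p + f p * fderiv ℝ h p w := by
  rw [fderiv_fun_mul hf hh]; simp; ring

lemma pd_const_mul (hf : DifferentiableAt ℝ f p) (a : ℝ) :
    fderiv ℝ (fun q => a * f q) p w = a * fderiv ℝ f p w := by
  rw [fderiv_const_mul hf]; simp

lemma pd_sq (hf : DifferentiableAt ℝ f p) :
    fderiv ℝ (fun q => f q ^ 2) p w = 2 * f p * fderiv ℝ f p w := by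
  simp only [pow_two]
  rw [pd_mul hf hf]; ring

lemma pd_cube (hf : DifferentiableAt ℝ f p) :
    fderiv ℝ (fun q => f q ^ 3) p w = 3 * f p ^ 2 * fderiv ℝ f p w := by
  have : ∀ q, f q ^ 3 = f q * f q ^ 2 := fun q => by ring
  simp only [this]
  rw [pd_mul hf (hf.fun_pow 2), pd_sq hf]; ring

lemma pd_swap (hU : IsOpen U) (hf : ContDiffOn ℝ ∞ f U) (hp : p ∈ U) :
    pdu (pdv f) p = pdv (pdu f) p := by
  have hc : ContDiffAt ℝ ∞ f p := (hf p hp).contDiffAt (hU.mem_nhds hp)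
  have h2 : (2 : WithTop ℕ∞) ≤ ∞ := by decide
  have hsymm := hc.isSymmSndFDerivAt (by simpa using h2)
  have hd : DifferentiableAt ℝ (fderiv ℝ f) p :=
    (hc.fderiv_right (m := 1) h2).differentiableAt one_ne_zero
  have e1 : pdu (pdv f) p = fderiv ℝ (fderiv ℝ f) p (1, 0) (0, 1) := by
    show fderiv ℝ (fun q => fderiv ℝ f q (0, 1)) p (1, 0) = _
    rw [fderiv_clm_apply hd (differentiableAt_const _)]
    simp
  have e2 : pdv (pdu f) p = fderiv ℝ (fderiv ℝ f) p (0, 1) (1, 0) := by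
    show fderiv ℝ (fun q => fderiv ℝ f q (1, 0)) p (0, 1) = _
    rw [fderiv_clm_apply hd (differentiableAt_const _)]
    simp
  rw [e1, e2, hsymm.eq]

end helpers

lemma pd_congr' {U : Set (ℝ × ℝ)} {f h : ℝ × ℝ → ℝ} {p : ℝ × ℝ}
    (hU : IsOpen U) (hfh : ∀ q ∈ U, f q = h q) (hp : p ∈ U) (w : ℝ × ℝ) :
    fderiv ℝ f p w = fderiv ℝ h p w := by rw [pd_congr hU hfh hp]

theorem stmt_5 (U : Set (ℝ × ℝ)) (hU : IsOpen U)
    (g : ℝ × ℝ → ℝ) (hg : ContDiffOn ℝ (⊤ : ℕ∞) g U)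
    (hharm : ∀ p ∈ U, pdu (pdu g) p + pdv (pdv g) p = 0)
    (c : ℝ) (hc : c ≠ 0)
    (heq : ∀ p ∈ U, 2 * c^2 * (g p)^3 = (pdu g p)^2 + (pdv g p)^2) :
    ∀ p ∈ U,
      g p * pdv g p * (3 * c^2 * (g p)^3 - (pdu g p)^2 - (pdv g p)^2) = 0 ∧
      g p * pdu g p * (3 * c^2 * (g p)^3 - (pdu g p)^2 - (pdv g p)^2) = 0 := by
  have hg' : ContDiffOn ℝ ∞ g U := hg.of_le (by simp)
  have Su := pdu_contDiffOn hU hg'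
  have Sv := pdv_contDiffOn hU hg'
  have Suu := pdu_contDiffOn hU Su
  have Suv := pdu_contDiffOn hU Sv
  have Svu := pdv_contDiffOn hU Su
  have Svv := pdv_contDiffOn hU Sv
  have symg : ∀ q ∈ U, pdu (pdv g) q = pdv (pdu g) q := fun q hq => pd_swap hU hg' hq
  have symu : ∀ q ∈ U, pdu (pdv (pdu g)) q = pdv (pdu (pdu g)) q := fun q hq => pd_swap hU Su hq
  have symv : ∀ q ∈ U, pdu (pdv (pdv g)) q = pdv (pdu (pdv g)) q := fun q hq => pd_swap hU Sv hq
  -- first derivatives of the constraint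
  have E1 : ∀ q ∈ U, 3*c^2*((g q)^2 * pdu g q)
      = pdu g q * pdu (pdu g) q + pdv g q * pdu (pdv g) q := by
    intro q hq
    have h := pd_congr' hU heq hq (1,0)
    rw [pd_const_mul ((dAt hU hg' hq).fun_pow 3) (2*c^2), pd_cube (dAt hU hg' hq),
        pd_add ((dAt hU Su hq).fun_pow 2) ((dAt hU Sv hq).fun_pow 2),
        pd_sq (dAt hU Su hq), pd_sq (dAt hU Sv hq)] at h
    simp only [pdu, pdv] at h ⊢
    linarith
  have E2 : ∀ q ∈ U, 3*c^2*((g q)^2 * pdv g q)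
      = pdu g q * pdv (pdu g) q + pdv g q * pdv (pdv g) q := by
    intro q hq
    have h := pd_congr' hU heq hq (0,1)
    rw [pd_const_mul ((dAt hU hg' hq).fun_pow 3) (2*c^2), pd_cube (dAt hU hg' hq),
        pd_add ((dAt hU Su hq).fun_pow 2) ((dAt hU Sv hq).fun_pow 2),
        pd_sq (dAt hU Su hq), pd_sq (dAt hU Sv hq)] at h
    simp only [pdu, pdv] at h ⊢
    linarith
  -- derivatives of the harmonicity relation
  have hharm0 : ∀ q ∈ U, pdu (pdu g) q + pdv (pdv g) q = (fun _ => (0:ℝ)) q := hharm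
  have dHu : ∀ q ∈ U, pdu (pdu (pdu g)) q + pdu (pdv (pdv g)) q = 0 := by
    intro q hq
    have h := pd_congr' hU hharm0 hq (1,0)
    rw [pd_add (dAt hU Suu hq) (dAt hU Svv hq), fderiv_fun_const] at h
    simpa [pdu, pdv] using h
  have dHv : ∀ q ∈ U, pdv (pdu (pdu g)) q + pdv (pdv (pdv g)) q = 0 := by
    intro q hq
    have h := pd_congr' hU hharm0 hq (0,1)
    rw [pd_add (dAt hU Suu hq) (dAt hU Svv hq), fderiv_fun_const] at h
    simpa [pdu, pdv] using h
  -- laplacians of the first partials vanish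
  have Lap_u : ∀ q ∈ U, pdu (pdu (pdu g)) q + pdv (pdv (pdu g)) q = 0 := by
    intro q hq
    have h1 : pdu (pdv (pdv g)) q = pdv (pdu (pdv g)) q := symv q hq
    have h2 : pdv (pdu (pdv g)) q = pdv (pdv (pdu g)) q := pd_congr' hU symg hq (0,1)
    have := dHu q hq
    rw [h1, h2] at this
    exact this
  have Lap_v : ∀ q ∈ U, pdu (pdu (pdv g)) q + pdv (pdv (pdv g)) q = 0 := by
    intro q hq
    have h1 : pdu (pdu (pdv g)) q = pdu (pdv (pdu g)) q := pd_congr' hU symg hq (1,0)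
    have h2 : pdu (pdv (pdu g)) q = pdv (pdu (pdu g)) q := symu q hq
    have := dHv q hq
    rw [h1.trans h2]
    exact this
  -- second derivatives of the constraint
  have E1u : ∀ q ∈ U,
      3*c^2*(2*(g q)*(pdu g q)*(pdu g q) + (g q)^2 * pdu (pdu g) q)
      = pdu (pdu g) q * pdu (pdu g) q + pdu g q * pdu (pdu (pdu g)) q
        + pdu (pdv g) q * pdu (pdv g) q + pdv g q * pdu (pdu (pdv g)) q := by
    intro q hq
    have h := pd_congr' hU E1 hq (1,0)
    rw [pd_const_mul (((dAt hU hg' hq).fun_pow 2).fun_mul (dAt hU Su hq)) (3*c^2),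
        pd_mul ((dAt hU hg' hq).fun_pow 2) (dAt hU Su hq), pd_sq (dAt hU hg' hq),
        pd_add ((dAt hU Su hq).fun_mul (dAt hU Suu hq)) ((dAt hU Sv hq).fun_mul (dAt hU Suv hq)),
        pd_mul (dAt hU Su hq) (dAt hU Suu hq), pd_mul (dAt hU Sv hq) (dAt hU Suv hq)] at h
    simp only [pdu, pdv] at h ⊢
    linarith
  have E2v : ∀ q ∈ U,
      3*c^2*(2*(g q)*(pdv g q)*(pdv g q) + (g q)^2 * pdv (pdv g) q)
      = pdv (pdu g) q * pdv (pdu g) q + pdu g q * pdv (pdv (pdu g)) q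
        + pdv (pdv g) q * pdv (pdv g) q + pdv g q * pdv (pdv (pdv g)) q := by
    intro q hq
    have h := pd_congr' hU E2 hq (0,1)
    rw [pd_const_mul (((dAt hU hg' hq).fun_pow 2).fun_mul (dAt hU Sv hq)) (3*c^2),
        pd_mul ((dAt hU hg' hq).fun_pow 2) (dAt hU Sv hq), pd_sq (dAt hU hg' hq),
        pd_add ((dAt hU Su hq).fun_mul (dAt hU Svu hq)) ((dAt hU Sv hq).fun_mul (dAt hU Svv hq)),
        pd_mul (dAt hU Su hq) (dAt hU Svu hq), pd_mul (dAt hU Sv hq) (dAt hU Svv hq)] at h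
    simp only [pdu, pdv] at h ⊢
    linarith
  -- pointwise algebra: conclude g = 0 on U
  have hg0 : ∀ p ∈ U, g p = 0 := by
    intro p hp
    have hB : pdv (pdu g) p = pdu (pdv g) p := (symg p hp).symm
    have hV2 : pdv (pdv g) p = -(pdu (pdu g) p) := by have := hharm p hp; linarith
    have h0 := heq p hp
    have e1 := E1 p hp
    have e2 := E2 p hp
    rw [hB, hV2] at e2
    have e1u := E1u p hp
    have e2v := E2v p hp
    rw [hB, hV2] at e2v
    have lu := Lap_u p hp
    have lv := Lap_v p hp
    have hP3 : pdv (pdv (pdu g)) p = -(pdu (pdu (pdu g)) p) := by linarith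
    have hP4 : pdv (pdv (pdv g)) p = -(pdu (pdu (pdv g)) p) := by linarith
    rw [hP3, hP4] at e2v
    have key1 : 2*((pdu (pdu g) p)^2 + (pdu (pdv g) p)^2)
        = 6*c^2*(g p)*((pdu g p)^2 + (pdv g p)^2) := by
      linear_combination -e1u - e2v
    have key2 : ((pdu g p)^2 + (pdv g p)^2)*((pdu (pdu g) p)^2 + (pdu (pdv g) p)^2)
        = 9*c^4*(g p)^4*((pdu g p)^2 + (pdv g p)^2) := by
      linear_combination (-(3*c^2*(g p)^2*(pdu g p) + pdu g p * pdu (pdu g) p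
          + pdv g p * pdu (pdv g) p)) * e1
        + (-(3*c^2*(g p)^2*(pdv g p) + pdu g p * pdu (pdv g) p
          - pdv g p * pdu (pdu g) p)) * e2
    have key3 : 6*c^6*(g p)^7 = 0 := by
      linear_combination -key2 + (((pdu g p)^2 + (pdv g p)^2)/2)*key1
        + (3*c^4*(g p)^4 - 3*c^2*(g p)*((pdu g p)^2 + (pdv g p)^2))*h0
    have h7 : (g p)^7 = 0 := by
      have h6 : (6:ℝ)*c^6 ≠ 0 := mul_ne_zero (by norm_num) (pow_ne_zero _ hc)
      have hmul : (6*c^6) * (g p)^7 = 0 := by linear_combination key3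
      exact (mul_eq_zero.mp hmul).resolve_left h6
    exact pow_eq_zero_iff (by norm_num) |>.mp h7
  intro p hp
  rw [hg0 p hp]
  constructor <;> ring
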